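/- Let |0⟩, |1⟩ be the computational basis of ℂ² and |0̄⟩ = (|0⟩+|1⟩)/√2, |1̄⟩ = (|0⟩−|1⟩)/√2 the diagonal basis. There exists no density matrix σ on ℂ² ⊗ ℂ² ⊗ ℂ² (factors labelled R_A, R_B, S) such that the partial trace over R_B equals (1/2)(|0⟩⟨0|_{R_A} ⊗ |0⟩⟨0|_S + |1⟩⟨1|_{R_A} ⊗ |1⟩⟨1|_S) and the partial trace over R_A equals (1/2)(|0⟩⟨0|_{R_B} ⊗ |0̄⟩⟨0̄|_S + |1⟩⟨1|_{R_B} ⊗ |1̄⟩⟨1̄|_S). -/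

import Mathlib

/-!
The `R_A S` marginal gives zero weight to every basis state `|a, b, s⟩` with `s ≠ a`, so the
positive semidefinite `σ` vanishes on the rows and columns of those states. Each entry
`σ (a, b, 0) (a, b, 1)` meets one of them, hence the `R_B S` marginal has no coherence between
`|b, 0⟩` and `|b, 1⟩`; but the prescribed one has the entry `1/4` there, from `|0̄⟩⟨0̄|`.
-/

open Matrix BigOperators Kronecker
open scoped ComplexOrder

/-- A density matrix: positive semidefinite with trace one. -/
def IsDensity {n : Type*} [Fintype n] [DecidableEq n] (ρ : Matrix n n ℂ) : Prop :=
  ρ.PosSemidef ∧ ρ.trace = 1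

/-- The computational basis vectors `|0⟩, |1⟩` of `ℂ²`. -/
def ket (r : Fin 2) : Fin 2 → ℂ := fun i => if i = r then 1 else 0

/-- The diagonal basis vectors `|0̄⟩ = (|0⟩+|1⟩)/√2` and `|1̄⟩ = (|0⟩−|1⟩)/√2`. -/
noncomputable def ketbar (r : Fin 2) : Fin 2 → ℂ :=
  fun i => ((Real.sqrt 2)⁻¹ : ℂ) * (if i = 0 then 1 else if r = 0 then 1 else -1)

/-- The rank-one projector `|v⟩⟨v|`. -/
def proj {n : Type*} [Fintype n] (v : n → ℂ) : Matrix n n ℂ :=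
  Matrix.vecMulVec v (star v)

/-- Partial trace over the middle factor `R_B` of a tripartite state on `R_A ⊗ R_B ⊗ S`. -/
noncomputable def ptraceRB (σ : Matrix (Fin 2 × Fin 2 × Fin 2) (Fin 2 × Fin 2 × Fin 2) ℂ) :
    Matrix (Fin 2 × Fin 2) (Fin 2 × Fin 2) ℂ :=
  fun p q => ∑ k : Fin 2, σ (p.1, k, p.2) (q.1, k, q.2)

/-- Partial trace over the first factor `R_A` of a tripartite state on `R_A ⊗ R_B ⊗ S`. -/
noncomputable def ptraceRA (σ : Matrix (Fin 2 × Fin 2 × Fin 2) (Fin 2 × Fin 2 × Fin 2) ℂ) :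
    Matrix (Fin 2 × Fin 2) (Fin 2 × Fin 2) ℂ :=
  fun p q => ∑ k : Fin 2, σ (k, p.1, p.2) (k, q.1, q.2)

namespace Matrix.PosSemidef

variable {n 𝕜 : Type*} [Fintype n] [RCLike 𝕜] {A : Matrix n n 𝕜}

theorem apply_eq_zero_of_diag_eq_zero_right (hA : A.PosSemidef) {i : n} (h : A i i = 0)
    (j : n) : A j i = 0 := by
  classical
  have hcol : A *ᵥ Pi.single i 1 = 0 := by
    rw [← hA.dotProduct_mulVec_zero_iff]
    simpa [mulVec_single, ← Pi.single_star, single_dotProduct] using h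
  simpa [mulVec_single] using congrFun hcol j

theorem apply_eq_zero_of_diag_eq_zero_left (hA : A.PosSemidef) {i : n} (h : A i i = 0)
    (j : n) : A i j = 0 := by
  rw [← hA.1.apply i j, hA.apply_eq_zero_of_diag_eq_zero_right h j, star_zero]

theorem diag_eq_zero_of_ptraceRB_diag_eq_zero
    {σ : Matrix (Fin 2 × Fin 2 × Fin 2) (Fin 2 × Fin 2 × Fin 2) ℂ} (hσ : σ.PosSemidef)
    {p : Fin 2 × Fin 2} (h : ptraceRB σ p p = 0) (k : Fin 2) :
    σ (p.1, k, p.2) (p.1, k, p.2) = 0 :=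
  (Finset.sum_eq_zero_iff_of_nonneg fun _ _ => hσ.diag_nonneg).mp h k (Finset.mem_univ k)

theorem ptraceRA_apply_eq_zero_of_ptraceRB
    {σ : Matrix (Fin 2 × Fin 2 × Fin 2) (Fin 2 × Fin 2 × Fin 2) ℂ} (hσ : σ.PosSemidef)
    (h01 : ptraceRB σ (0, 1) (0, 1) = 0) (h10 : ptraceRB σ (1, 0) (1, 0) = 0) (b : Fin 2) :
    ptraceRA σ (b, 0) (b, 1) = 0 := by
  have h0 := hσ.apply_eq_zero_of_diag_eq_zero_right
    (hσ.diag_eq_zero_of_ptraceRB_diag_eq_zero h01 b) (0, b, 0)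
  have h1 := hσ.apply_eq_zero_of_diag_eq_zero_left
    (hσ.diag_eq_zero_of_ptraceRB_diag_eq_zero h10 b) (1, b, 1)
  simp [ptraceRA, Fin.sum_univ_two, h0, h1]

end Matrix.PosSemidef

/-- Objective outcome paradox (Theorem 2): no tripartite state on `R_A ⊗ R_B ⊗ S` has both
the marginal `(1/2)(|0⟩⟨0|⊗|0⟩⟨0| + |1⟩⟨1|⊗|1⟩⟨1|)` on `R_A S` and the marginal
`(1/2)(|0⟩⟨0|⊗|0̄⟩⟨0̄| + |1⟩⟨1|⊗|1̄⟩⟨1̄|)` on `R_B S`. -/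
theorem no_joint_tripartite_state :
    ¬ ∃ σ : Matrix (Fin 2 × Fin 2 × Fin 2) (Fin 2 × Fin 2 × Fin 2) ℂ,
      IsDensity σ ∧
      ptraceRB σ =
        ((1 : ℂ) / 2) • (proj (ket 0) ⊗ₖ proj (ket 0) + proj (ket 1) ⊗ₖ proj (ket 1)) ∧
      ptraceRA σ =
        ((1 : ℂ) / 2) • (proj (ket 0) ⊗ₖ proj (ketbar 0) + proj (ket 1) ⊗ₖ proj (ketbar 1)) := by
  rintro ⟨σ, ⟨hσ, -⟩, hRB, hRA⟩
  have h01 : ptraceRB σ (0, 1) (0, 1) = 0 := by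
    simp [hRB, proj, ket, vecMulVec_apply]
  have h10 : ptraceRB σ (1, 0) (1, 0) = 0 := by
    simp [hRB, proj, ket, vecMulVec_apply]
  have hcoh : ptraceRA σ (0, 0) (0, 1) = 1 / 4 := by
    have hsqrt : ((√2 : ℝ) : ℂ)⁻¹ * ((√2 : ℝ) : ℂ)⁻¹ = 1 / 2 := by
      rw [← mul_inv, ← Complex.ofReal_mul, Real.mul_self_sqrt zero_le_two]
      norm_num
    norm_num [hRA, proj, ket, ketbar, vecMulVec_apply, hsqrt]
  have hdecoh := hσ.ptraceRA_apply_eq_zero_of_ptraceRB h01 h10 0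
  norm_num [hcoh] at hdecoh
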